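/- Schur complement identity for the diagonal entries of 𝒢: Let Y be an N×N complex matrix and w∈ℂ with Im w > 0. Fix an index i, let 𝓎_i denote the i-th row of Y (a 1×N vector), and let Y^{(∅,i)} be the (N−1)×N matrix obtained from Y by deleting the i-th row. Set 𝒢 = (YY^* − w)^{-1} and G^{(∅,i)} = ((Y^{(∅,i)})^*Y^{(∅,i)} − w)^{-1}. Then 1 + 𝓎_i G^{(∅,i)} 𝓎_i^* ≠ 0 and 𝒢_{ii} = −w^{-1}(1 + 𝓎_i G^{(∅,i)} 𝓎_i^*)^{-1}. -/

import Mathlib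

open MeasureTheory Matrix ProbabilityTheory

noncomputable section

namespace LCL

variable {Ω : Type} [MeasurableSpace Ω]

/-- `SD μ W Ψ` : the family of random variables `W` is stochastically dominated by the
family of deterministic parameters `Ψ`. -/
def SD (μ : Measure Ω) (W : ℕ → Ω → ℝ) (Ψ : ℕ → ℝ) : Prop :=
  ∀ σ : ℝ, 0 < σ → ∀ D : ℝ, 0 < D → ∃ N₀ : ℕ, ∀ N : ℕ, N₀ ≤ N →
    μ {ω | (N : ℝ) ^ σ * Ψ N < |W N ω|} ≤ ENNReal.ofReal ((N : ℝ) ^ (-D))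

/-- Stochastic domination, uniformly over a parameter set. -/
def SDU {P : Type} (μ : Measure Ω) (Tset : ℕ → Set P)
    (W : ℕ → P → Ω → ℝ) (Ψ : ℕ → P → ℝ) : Prop :=
  ∀ σ : ℝ, 0 < σ → ∀ D : ℝ, 0 < D → ∃ N₀ : ℕ, ∀ N : ℕ, N₀ ≤ N → ∀ T ∈ Tset N,
    μ {ω | (N : ℝ) ^ σ * Ψ N T < |W N T ω|} ≤ ENNReal.ofReal ((N : ℝ) ^ (-D))

/-- Uniform subexponential decay of the matrix entries. -/
def SubExp (μ : Measure Ω) (X : ∀ N : ℕ, Ω → Matrix (Fin N) (Fin N) ℝ) : Prop :=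
  ∃ θ : ℝ, 0 < θ ∧ ∀ N : ℕ, ∀ i j : Fin N, ∀ lam : ℝ, 0 < lam →
    μ {ω | lam < Real.sqrt (N : ℝ) * |X N ω i j|} ≤ ENNReal.ofReal (θ⁻¹ * Real.exp (-lam ^ θ))

/-- The entries of each `X N` are independent random variables. -/
def IndepEntries (μ : Measure Ω) (X : ∀ N : ℕ, Ω → Matrix (Fin N) (Fin N) ℝ) : Prop :=
  ∀ N : ℕ, iIndepFun (m := fun _ : Fin N × Fin N => inferInstance)
    (fun p ω => X N ω p.1 p.2) μ

/-- All entries are centered. -/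
def Centered (μ : Measure Ω) (X : ∀ N : ℕ, Ω → Matrix (Fin N) (Fin N) ℝ) : Prop :=
  ∀ N : ℕ, ∀ i j : Fin N, ∫ ω, X N ω i j ∂μ = 0

/-- All entries have variance `1/N`. -/
def VarEntries (μ : Measure Ω) (X : ∀ N : ℕ, Ω → Matrix (Fin N) (Fin N) ℝ) : Prop :=
  ∀ N : ℕ, ∀ i j : Fin N, ∫ ω, (X N ω i j) ^ 2 ∂μ = 1 / N

/-- All entries except the `(a,b)` entry have variance `1/N`. -/
def VarEntriesEx (μ : Measure Ω) (X : ∀ N : ℕ, Ω → Matrix (Fin N) (Fin N) ℝ)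
    (a b : ∀ N : ℕ, Fin N) : Prop :=
  ∀ N : ℕ, ∀ i j : Fin N, (i, j) ≠ (a N, b N) → ∫ ω, (X N ω i j) ^ 2 ∂μ = 1 / N

/-- The `(a,b)` entry vanishes. -/
def ZeroAB (X : ∀ N : ℕ, Ω → Matrix (Fin N) (Fin N) ℝ) (a b : ∀ N : ℕ, Fin N) : Prop :=
  ∀ N : ℕ, ∀ ω : Ω, X N ω (a N) (b N) = 0

/-- `Y_z = X - z` -/
def Yz {n : Type} [Fintype n] [DecidableEq n] (A : Matrix n n ℝ) (z : ℂ) : Matrix n n ℂ :=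
  A.map ((↑) : ℝ → ℂ) - z • 1

/-- `G(w,z) = (Y_z^* Y_z - w)⁻¹` -/
def Gr {n : Type} [Fintype n] [DecidableEq n] (A : Matrix n n ℝ) (z w : ℂ) : Matrix n n ℂ :=
  ((Yz A z)ᴴ * Yz A z - w • 1)⁻¹

/-- `𝒢(w,z) = (Y_z Y_z^* - w)⁻¹` -/
def cGr {n : Type} [Fintype n] [DecidableEq n] (A : Matrix n n ℝ) (z w : ℂ) : Matrix n n ℂ :=
  (Yz A z * (Yz A z)ᴴ - w • 1)⁻¹

/-- `m(w,z) = N⁻¹ tr G(w,z)` (the normalisation `N` is external, so that this also applies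
to minors). -/
def mSt (N : ℕ) {n : Type} [Fintype n] [DecidableEq n] (A : Matrix n n ℝ) (z w : ℂ) : ℂ :=
  (N : ℂ)⁻¹ * (Gr A z w).trace

/-- the minor `X^{(a,a)}` obtained by removing the `a`-th row and column. -/
def mm {N : ℕ} (A : Matrix (Fin N) (Fin N) ℝ) (a : Fin N) :
    Matrix {i : Fin N // i ≠ a} {i : Fin N // i ≠ a} ℝ :=
  A.submatrix (fun i => i.1) (fun j => j.1)

/-- even extension `h(x) = h(|x|)` -/
def hev (h : ℝ → ℝ) (x : ℝ) : ℝ := h |x|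

/-- `λ₊(z) = (α+3)³/(8(α+1))`, `α = √(1+8|z|²)` -/
def lamPlus (z : ℂ) : ℝ :=
  (Real.sqrt (1 + 8 * ‖z‖ ^ 2) + 3) ^ 3 /
    (8 * (Real.sqrt (1 + 8 * ‖z‖ ^ 2) + 1))

/-- `φ_{ε,z}(x) = h(N^{2-2ε}x) (log x) (1 - h(x/(2λ₊)))` -/
def phiF (h : ℝ → ℝ) (N : ℕ) (ε : ℝ) (z : ℂ) (x : ℝ) : ℝ :=
  h ((N : ℝ) ^ (2 - 2 * ε) * x) * Real.log x * (1 - h (x / (2 * lamPlus z)))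

/-- the domain `I_ε`, as a set of pairs `(E, η)` -/
def Iset (N : ℕ) (ε : ℝ) : Set (ℝ × ℝ) :=
  {p : ℝ × ℝ |
    (N : ℝ) ^ (-1 + ε) * Real.sqrt p.1 ≤ p.2 ∧ (N : ℝ) ^ (-2 + 2 * ε) ≤ p.1 ∧
      ‖(p.1 : ℂ) + (p.2 : ℂ) * Complex.I‖ ≤ ε}

/-- Laplacian of a function `f : ℂ → ℝ` -/
def lap (f : ℂ → ℝ) (ξ : ℂ) : ℝ :=
  iteratedDeriv 2 (fun t : ℝ => f (ξ + (t : ℂ))) 0 +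
    iteratedDeriv 2 (fun t : ℝ => f (ξ + (t : ℂ) * Complex.I)) 0

/-- `t_X = N^{-ε} η Re tr G` -/
def tXv (N : ℕ) {n : Type} [Fintype n] [DecidableEq n] (A : Matrix n n ℝ) (ε : ℝ)
    (z w : ℂ) : ℝ :=
  (N : ℝ) ^ (-ε) * w.im * ((Gr A z w).trace).re

/-- `z = z₀ + N^{-s} ξ` -/
def zp (N : ℕ) (s : ℝ) (z0 ξ : ℂ) : ℂ := z0 + (((N : ℝ) ^ (-s) : ℝ) : ℂ) * ξ

/-- `w = E + iη` -/
def wp (p : ℝ × ℝ) : ℂ := (p.1 : ℂ) + (p.2 : ℂ) * Complex.I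

/-- `m_c(w,z)` is the unique solution with positive imaginary part of
`m_c⁻¹ = -w(1+m_c) + |z|²(1+m_c)⁻¹`. -/
def IsMc (mc : ℂ → ℂ → ℂ) : Prop :=
  ∀ w z : ℂ, 0 < w.im →
    (0 < (mc w z).im ∧
      (mc w z)⁻¹ = -w * (1 + mc w z) + ((‖z‖ ^ 2 : ℝ) : ℂ) * (1 + mc w z)⁻¹) ∧
    ∀ m' : ℂ, 0 < m'.im →
      m'⁻¹ = -w * (1 + m') + ((‖z‖ ^ 2 : ℝ) : ℂ) * (1 + m')⁻¹ → m' = mc w z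

/-- `h` is a smooth increasing function vanishing on `(-∞,1]` and equal to `1` on `[2,∞)`. -/
def IsH (h : ℝ → ℝ) : Prop :=
  ContDiff ℝ (⊤ : ℕ∞) h ∧ Monotone h ∧ (∀ x : ℝ, x ≤ 1 → h x = 0) ∧ ∀ x : ℝ, 2 ≤ x → h x = 1

/-- `χ` is a smooth cutoff supported in `[-1,1]`, equal to `1` on `[-1/2,1/2]`. -/
def IsChi (χ : ℝ → ℝ) : Prop :=
  ContDiff ℝ (⊤ : ℕ∞) χ ∧ Function.support χ ⊆ Set.Icc (-1 : ℝ) 1 ∧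
    ∀ x : ℝ, |x| ≤ 1 / 2 → χ x = 1

/-- the functional `A_X^{(f)}` -/
def AXf (N : ℕ) (A : Matrix (Fin N) (Fin N) ℝ) (f : ℂ → ℝ) (h χ : ℝ → ℝ)
    (mc : ℂ → ℂ → ℂ) (z0 : ℂ) (ε s : ℝ) : ℝ :=
  N * ∫ ξ : ℂ, lap f ξ *
    ∫ p in Iset N ε,
      χ p.2 * deriv (phiF h N ε (zp N s z0 ξ)) p.1 *
        (hev h (tXv N A ε (zp N s z0 ξ) (wp p)) * (mSt N A (zp N s z0 ξ) (wp p)).re -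
          (mc (wp p) (zp N s z0 ξ)).re)

/-- the functional `Z_{X,c}^{(f)}` -/
def ZXf (N : ℕ) (A : Matrix (Fin N) (Fin N) ℝ) (f : ℂ → ℝ) (h χ : ℝ → ℝ)
    (mc : ℂ → ℂ → ℂ) (z0 : ℂ) (ε s : ℝ) : ℝ :=
  N * ∫ ξ : ℂ, lap f ξ *
    ∫ p in Iset N ε,
      χ p.2 * deriv (phiF h N ε (zp N s z0 ξ)) p.1 *
        (mSt N A (zp N s z0 ξ) (wp p) - mc (wp p) (zp N s z0 ξ)).re

/-- `P_1` -/
def P1v (N : ℕ) (A : Matrix (Fin N) (Fin N) ℝ) (a b : Fin N) (z w : ℂ) : ℝ :=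
  (N : ℝ)⁻¹ * (-(2 * (Yz A z * Gr A z w ^ 2) a b)).re

/-- `P_2` -/
def P2v (N : ℕ) (A : Matrix (Fin N) (Fin N) ℝ) (a b : Fin N) (z w : ℂ) : ℝ :=
  (N : ℝ)⁻¹ *
    (w * cGr A z w a a * (Gr A z w ^ 2) b b +
      2 * (Yz A z * Gr A z w ^ 2) a b * (Gr A z w * (Yz A z)ᴴ) b a +
      (Yz A z * Gr A z w ^ 2 * (Yz A z)ᴴ) a a * Gr A z w b b).re

/-- `P_3` -/
def P3v (N : ℕ) (A : Matrix (Fin N) (Fin N) ℝ) (a b : Fin N) (z w : ℂ) : ℝ :=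
  (N : ℝ)⁻¹ *
    (-(2 : ℂ) * ((Gr A z w * (Yz A z)ᴴ) b a) ^ 2 * (Yz A z * Gr A z w ^ 2) a b -
      2 * (Gr A z w * (Yz A z)ᴴ) b a * (Yz A z * Gr A z w ^ 2 * (Yz A z)ᴴ) a a *
        Gr A z w b b -
      2 * (Gr A z w * (Yz A z)ᴴ) b a * w * cGr A z w a a * (Gr A z w ^ 2) b b -
      2 * w * cGr A z w a a * Gr A z w b b * (Yz A z * Gr A z w ^ 2) a b).re

/-- `B_n` -/
def Bnv (h : ℝ → ℝ) (N : ℕ) (ε : ℝ) (n : ℕ) (t η : ℝ) : ℝ :=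
  (n.factorial : ℝ)⁻¹ * ((N : ℝ) ^ (1 - ε) * η) ^ (n - 1) *
    (n * iteratedDeriv (n - 1) (hev h) t + iteratedDeriv n (hev h) t * t)

/-- `𝒫₁` -/
def scrP1 (N : ℕ) (A : Matrix (Fin N) (Fin N) ℝ) (a b : Fin N) (f : ℂ → ℝ) (h χ : ℝ → ℝ)
    (z0 : ℂ) (ε s : ℝ) : ℝ :=
  N * ∫ ξ : ℂ, lap f ξ *
    ∫ p in Iset N ε,
      Bnv h N ε 1 (tXv N A ε (zp N s z0 ξ) (wp p)) p.2 * P1v N A a b (zp N s z0 ξ) (wp p) *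
        (χ p.2 * deriv (phiF h N ε (zp N s z0 ξ)) p.1)

/-- `𝒫₂` -/
def scrP2 (N : ℕ) (A : Matrix (Fin N) (Fin N) ℝ) (a b : Fin N) (f : ℂ → ℝ) (h χ : ℝ → ℝ)
    (z0 : ℂ) (ε s : ℝ) : ℝ :=
  N * ∫ ξ : ℂ, lap f ξ *
    ∫ p in Iset N ε,
      (Bnv h N ε 1 (tXv N A ε (zp N s z0 ξ) (wp p)) p.2 * P2v N A a b (zp N s z0 ξ) (wp p) +
        Bnv h N ε 2 (tXv N A ε (zp N s z0 ξ) (wp p)) p.2 *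
          P1v N A a b (zp N s z0 ξ) (wp p) ^ 2) *
        (χ p.2 * deriv (phiF h N ε (zp N s z0 ξ)) p.1)

/-- `𝒫₃` -/
def scrP3 (N : ℕ) (A : Matrix (Fin N) (Fin N) ℝ) (a b : Fin N) (f : ℂ → ℝ) (h χ : ℝ → ℝ)
    (z0 : ℂ) (ε s : ℝ) : ℝ :=
  N * ∫ ξ : ℂ, lap f ξ *
    ∫ p in Iset N ε,
      (Bnv h N ε 1 (tXv N A ε (zp N s z0 ξ) (wp p)) p.2 * P3v N A a b (zp N s z0 ξ) (wp p) +
        2 * Bnv h N ε 2 (tXv N A ε (zp N s z0 ξ) (wp p)) p.2 *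
          P1v N A a b (zp N s z0 ξ) (wp p) * P2v N A a b (zp N s z0 ξ) (wp p) +
        Bnv h N ε 3 (tXv N A ε (zp N s z0 ξ) (wp p)) p.2 *
          P1v N A a b (zp N s z0 ξ) (wp p) ^ 3) *
        (χ p.2 * deriv (phiF h N ε (zp N s z0 ξ)) p.1)

/-- cutoff `χ_a = 1(|Re m^{(a,a)}| ≥ ½ N^ε (Nη)⁻¹)` -/
def chiA (N : ℕ) (A : Matrix (Fin N) (Fin N) ℝ) (a : Fin N) (ε : ℝ) (z w : ℂ) : ℝ :=
  if 1 / 2 * (N : ℝ) ^ ε / ((N : ℝ) * w.im) ≤ |(mSt N (mm A a) z w).re| then 1 else 0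

/-- `φ_N = (log N)^{log log N}` -/
def phiN (N : ℕ) : ℝ := Real.log N ^ Real.log (Real.log N)

/-- the minor `Y^{(T,U)}` of `Y = X - z`, obtained by removing the columns indexed by `T`
and the rows indexed by `U` (keeping the labels of the indices). -/
def Ymin (N : ℕ) (A : Matrix (Fin N) (Fin N) ℝ) (z : ℂ) (T U : Finset (Fin N)) :
    Matrix {i : Fin N // i ∉ U} {j : Fin N // j ∉ T} ℂ :=
  Matrix.of fun i j => (A i.1 j.1 : ℂ) - z * (if (i.1 : Fin N) = j.1 then 1 else 0)

/-- `G^{(T,U)} = ((Y^{(T,U)})^* Y^{(T,U)} - w)⁻¹` -/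
def GminTU (N : ℕ) (A : Matrix (Fin N) (Fin N) ℝ) (z w : ℂ) (T U : Finset (Fin N)) :
    Matrix {j : Fin N // j ∉ T} {j : Fin N // j ∉ T} ℂ :=
  ((Ymin N A z T U)ᴴ * Ymin N A z T U - w • 1)⁻¹

/-- `𝒢^{(T,U)} = (Y^{(T,U)} (Y^{(T,U)})^* - w)⁻¹` -/
def cGminTU (N : ℕ) (A : Matrix (Fin N) (Fin N) ℝ) (z w : ℂ) (T U : Finset (Fin N)) :
    Matrix {i : Fin N // i ∉ U} {i : Fin N // i ∉ U} ℂ :=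
  (Ymin N A z T U * (Ymin N A z T U)ᴴ - w • 1)⁻¹

/-- `𝒵_i^{(T)} = (1 - 𝔼_{y_i}) (y_i^{(T)})^* 𝒢^{(i,T)} y_i^{(T)}`, with the expectation
over the `i`-th column computed explicitly. -/
def Zi (N : ℕ) (A : Matrix (Fin N) (Fin N) ℝ) (z w : ℂ) (i : Fin N)
    (T : Finset (Fin N)) : ℂ :=
  (∑ k : {k : Fin N // k ∉ T}, ∑ l : {k : Fin N // k ∉ T},
      (starRingEnd ℂ) ((A k.1 i : ℂ) - z * (if (k.1 : Fin N) = i then 1 else 0)) *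
        cGminTU N A z w {i} T k l *
        ((A l.1 i : ℂ) - z * (if (l.1 : Fin N) = i then 1 else 0))) -
    ((N : ℂ)⁻¹ * (cGminTU N A z w {i} T).trace +
      (if h : i ∉ T then
          ((‖z‖ ^ 2 : ℝ) : ℂ) * cGminTU N A z w {i} T ⟨i, h⟩ ⟨i, h⟩
        else 0))

section Fsets

variable {P : Type}

/-- `V` is independent of the `a`-th row and column of `X`. -/
def IndepRC (μ : Measure Ω) {N : ℕ} (A : Ω → Matrix (Fin N) (Fin N) ℝ) (a : Fin N)
    (V : Ω → ℝ) : Prop :=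
  IndepFun V (fun ω => fun k : Fin N => (A ω a k, A ω k a)) μ

/-- the set `𝓕₀` of parametrized families of random variables which are `≺ 1` uniformly and
independent of the `a`-th row and column of `X`. -/
def F0u (μ : Measure Ω) (Tset : ℕ → Set P) (X : ∀ N : ℕ, Ω → Matrix (Fin N) (Fin N) ℝ)
    (a : ∀ N : ℕ, Fin N) : Set (∀ N : ℕ, P → Ω → ℝ) :=
  {V | SDU μ Tset V (fun _ _ => 1) ∧ ∀ N T, IndepRC μ (X N) (a N) (V N T)}

/-- the set `𝓕₁` of quadratic forms in the `a`-th row and column. -/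
def F1u (μ : Measure Ω) (Tset : ℕ → Set P) (X : ∀ N : ℕ, Ω → Matrix (Fin N) (Fin N) ℝ)
    (a : ∀ N : ℕ, Fin N) : Set (∀ N : ℕ, P → Ω → ℝ) :=
  {V |
    (∃ V0 ∈ F0u μ Tset X a,
        V = fun (N : ℕ) (T : P) (ω : Ω) => Real.sqrt (N : ℝ) * X N ω (a N) (a N) * V0 N T ω) ∨
    ∃ Vm : ∀ N : ℕ, P → Fin N → Fin N → Ω → ℝ,
      SDU μ Tset (fun N T ω => ⨆ kl : Fin N × Fin N, |Vm N T kl.1 kl.2 ω|)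
        (fun _ _ => 1) ∧
      (∀ N T k l, IndepRC μ (X N) (a N) (Vm N T k l)) ∧
      (V = (fun (N : ℕ) (T : P) (ω : Ω) => ∑ k ∈ Finset.univ.erase (a N), ∑ l ∈ Finset.univ.erase (a N),
              X N ω k (a N) * Vm N T k l ω * X N ω l (a N)) ∨
       V = (fun (N : ℕ) (T : P) (ω : Ω) => ∑ k ∈ Finset.univ.erase (a N), ∑ l ∈ Finset.univ.erase (a N),
              X N ω (a N) k * Vm N T k l ω * X N ω (a N) l) ∨
       V = (fun (N : ℕ) (T : P) (ω : Ω) =>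
              (∑ k ∈ Finset.univ.erase (a N), ∑ l ∈ Finset.univ.erase (a N),
                if k ≠ l then X N ω (a N) k * Vm N T k l ω * X N ω l (a N) else 0) +
              Real.sqrt (N : ℝ) * ∑ k ∈ Finset.univ.erase (a N),
                X N ω (a N) k * Vm N T k k ω * X N ω k (a N)))}

/-- the set `𝓕_{1/2}` of linear forms in the `a`-th row or column. -/
def Fhu (μ : Measure Ω) (Tset : ℕ → Set P) (X : ∀ N : ℕ, Ω → Matrix (Fin N) (Fin N) ℝ)
    (a : ∀ N : ℕ, Fin N) : Set (∀ N : ℕ, P → Ω → ℝ) :=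
  {V | ∃ Vk : ∀ N : ℕ, P → Fin N → Ω → ℝ,
      SDU μ Tset (fun N T ω => ⨆ k : Fin N, |Vk N T k ω|) (fun _ _ => 1) ∧
      (∀ N T k, IndepRC μ (X N) (a N) (Vk N T k)) ∧
      (V = (fun (N : ℕ) (T : P) (ω : Ω) => ∑ k ∈ Finset.univ.erase (a N), X N ω (a N) k * Vk N T k ω) ∨
       V = (fun (N : ℕ) (T : P) (ω : Ω) => ∑ k ∈ Finset.univ.erase (a N), Vk N T k ω * X N ω k (a N)))}

/-- `n`-fold products of elements of `S`. -/
def prodU (S : Set (∀ N : ℕ, P → Ω → ℝ)) : ℕ → Set (∀ N : ℕ, P → Ω → ℝ)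
  | 0 => {fun _ _ _ => 1}
  | n + 1 => {V | ∃ u ∈ S, ∃ v ∈ prodU S n, V = fun (N : ℕ) (T : P) (ω : Ω) => u N T ω * v N T ω}

/-- the set `𝓕`: sums of boundedly many elements of `𝓕₀ ∪ ⋃ₙ (𝓕₁)ⁿ`. -/
def Fcu (μ : Measure Ω) (Tset : ℕ → Set P) (X : ∀ N : ℕ, Ω → Matrix (Fin N) (Fin N) ℝ)
    (a : ∀ N : ℕ, Fin N) : Set (∀ N : ℕ, P → Ω → ℝ) :=
  {V | ∃ m : ℕ, ∃ g : Fin m → ∀ N : ℕ, P → Ω → ℝ,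
      (∀ i, g i ∈ F0u μ Tset X a ∪ ⋃ n : ℕ, prodU (F1u μ Tset X a) n) ∧
      V = fun (N : ℕ) (T : P) (ω : Ω) => ∑ i, g i N T ω}

/-- products of two sets of families. -/
def mulU (S₁ S₂ : Set (∀ N : ℕ, P → Ω → ℝ)) : Set (∀ N : ℕ, P → Ω → ℝ) :=
  {V | ∃ u ∈ S₁, ∃ v ∈ S₂, V = fun (N : ℕ) (T : P) (ω : Ω) => u N T ω * v N T ω}

/-- `V ∈ₙ S` : `V` is a sum of `O(1)` elements of `S`. -/
def sumN (S : Set (∀ N : ℕ, P → Ω → ℝ)) : Set (∀ N : ℕ, P → Ω → ℝ) :=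
  {V | ∃ m : ℕ, ∃ g : Fin m → ∀ N : ℕ, P → Ω → ℝ, (∀ i, g i ∈ S) ∧
      V = fun (N : ℕ) (T : P) (ω : Ω) => ∑ i, g i N T ω}

/-- `V ∈ₙ c·S + O_≺(N^{-D})` : decomposition with deterministic coefficient and error. -/
def decompU (μ : Measure Ω) (Tset : ℕ → Set P) (c : ℕ → P → ℝ)
    (S : Set (∀ N : ℕ, P → Ω → ℝ)) (Derr : ℝ) (V : ∀ N : ℕ, P → Ω → ℝ) : Prop :=
  ∃ V₁ V₂ : ∀ N : ℕ, P → Ω → ℝ, V₁ ∈ sumN S ∧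
    SDU μ Tset V₂ (fun N _ => (N : ℝ) ^ (-Derr)) ∧
    ∀ N T ω, V N T ω = c N T * V₁ N T ω + V₂ N T ω

end Fsets

/-- the parameter set `{(z,w) : | |z|-1 | ≤ 2ε, w ∈ I_ε}`. -/
def ZWset (N : ℕ) (ε : ℝ) : Set (ℂ × ℂ) :=
  {q : ℂ × ℂ | |‖q.1‖ - 1| ≤ 2 * ε ∧ (q.2.re, q.2.im) ∈ Iset N ε}


/-- `Y^{(∅,i)}` : the matrix `Y` with its `i`-th row deleted. -/
def rowDel (N : ℕ) (Y : Matrix (Fin N) (Fin N) ℂ) (i : Fin N) :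
    Matrix {k : Fin N // k ≠ i} (Fin N) ℂ :=
  Matrix.of fun k j => Y k.1 j

/-- `G^{(∅,i)} = ((Y^{(∅,i)})^* Y^{(∅,i)} - w)⁻¹`. -/
def Gdel (N : ℕ) (Y : Matrix (Fin N) (Fin N) ℂ) (i : Fin N) (w : ℂ) :
    Matrix (Fin N) (Fin N) ℂ :=
  ((rowDel N Y i)ᴴ * rowDel N Y i - w • 1)⁻¹

/-- the quadratic form `𝓎_i G^{(∅,i)} 𝓎_i^*`. -/
def quadRow (N : ℕ) (Y : Matrix (Fin N) (Fin N) ℂ) (i : Fin N) (w : ℂ) : ℂ :=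
  ∑ j : Fin N, ∑ l : Fin N, Y i j * Gdel N Y i w j l * star (Y i l)


section SchurAux

open ComplexOrder in
private lemma LCLAux.im_dot {n : Type} [Fintype n] (x : n → ℂ) :
    (dotProduct (star x) x).im = 0 := by
  simp [dotProduct, Complex.im_sum, Complex.mul_im, mul_comm]

open ComplexOrder in
private lemma LCLAux.sq_det_ne {m n : Type} [Fintype m] [Fintype n] [DecidableEq m]
    (B : Matrix m n ℂ) (w : ℂ) (hw : w.im ≠ 0) :
    (B * Bᴴ - w • (1 : Matrix m m ℂ)).det ≠ 0 := by
  intro hdet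
  obtain ⟨v, hv, hmul⟩ := Matrix.exists_mulVec_eq_zero_iff.mpr hdet
  rw [Matrix.sub_mulVec, sub_eq_zero, Matrix.smul_mulVec, Matrix.one_mulVec] at hmul
  have h2 : dotProduct (star v) ((B * Bᴴ) *ᵥ v) = w * dotProduct (star v) v := by
    rw [hmul, dotProduct_smul, smul_eq_mul]
  have h3 : dotProduct (star v) ((B * Bᴴ) *ᵥ v)
      = dotProduct (star (Bᴴ *ᵥ v)) (Bᴴ *ᵥ v) := by
    rw [← Matrix.mulVec_mulVec, dotProduct_mulVec, Matrix.star_mulVec,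
      Matrix.conjTranspose_conjTranspose]
  have h4 : (w * dotProduct (star v) v).im = 0 := by
    rw [← h2, h3]; exact LCLAux.im_dot _
  have h5 : (dotProduct (star v) v).im = 0 := LCLAux.im_dot v
  rw [Complex.mul_im, h5, mul_zero, zero_add, mul_eq_zero] at h4
  have h6 : dotProduct (star v) v = 0 := by
    rcases h4 with h | h
    · exact absurd h hw
    · exact Complex.ext h h5
  exact hv (dotProduct_star_self_eq_zero.mp h6)

private lemma LCLAux.sq_det_ne' {m n : Type} [Fintype m] [Fintype n] [DecidableEq n]
    (B : Matrix m n ℂ) (w : ℂ) (hw : w.im ≠ 0) :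
    (Bᴴ * B - w • (1 : Matrix n n ℂ)).det ≠ 0 := by
  have := LCLAux.sq_det_ne Bᴴ w hw
  rwa [Matrix.conjTranspose_conjTranspose] at this

private lemma LCLAux.swap_inv {m n : Type} [Fintype m] [Fintype n] [DecidableEq m]
    [DecidableEq n] (B : Matrix m n ℂ) (w : ℂ) (hw : w.im ≠ 0) :
    Bᴴ * (B * Bᴴ - w • 1)⁻¹ = (Bᴴ * B - w • 1)⁻¹ * Bᴴ := by
  have hd1 : IsUnit (B * Bᴴ - w • (1 : Matrix m m ℂ)).det := (LCLAux.sq_det_ne B w hw).isUnit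
  have hd2 : IsUnit (Bᴴ * B - w • (1 : Matrix n n ℂ)).det := (LCLAux.sq_det_ne' B w hw).isUnit
  have key : Bᴴ * (B * Bᴴ - w • 1) = (Bᴴ * B - w • 1) * Bᴴ := by
    rw [Matrix.mul_sub, Matrix.sub_mul, Matrix.mul_smul, Matrix.smul_mul, Matrix.mul_one,
      Matrix.one_mul, Matrix.mul_assoc]
  calc Bᴴ * (B * Bᴴ - w • 1)⁻¹
      = ((Bᴴ * B - w • 1)⁻¹ * (Bᴴ * B - w • 1)) * (Bᴴ * (B * Bᴴ - w • 1)⁻¹) := by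
        rw [Matrix.nonsing_inv_mul _ hd2, Matrix.one_mul]
    _ = (Bᴴ * B - w • 1)⁻¹ * ((Bᴴ * B - w • 1) * Bᴴ) * (B * Bᴴ - w • 1)⁻¹ := by
        simp only [Matrix.mul_assoc]
    _ = (Bᴴ * B - w • 1)⁻¹ * Bᴴ * ((B * Bᴴ - w • 1) * (B * Bᴴ - w • 1)⁻¹) := by
        rw [← key]; simp only [Matrix.mul_assoc]
    _ = (Bᴴ * B - w • 1)⁻¹ * Bᴴ := by
        rw [Matrix.mul_nonsing_inv _ hd1, Matrix.mul_one]

end SchurAux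

/-- **Schur complement identity for the diagonal entries of `𝒢`** (equation (5.3)). -/
theorem schur_complement_diagonal (N : ℕ) (Y : Matrix (Fin N) (Fin N) ℂ) (w : ℂ)
    (hw : 0 < w.im) (i : Fin N) :
    1 + quadRow N Y i w ≠ 0 ∧
      (Y * Yᴴ - w • 1)⁻¹ i i = -w⁻¹ * (1 + quadRow N Y i w)⁻¹ := by
  classical
  have hwim : w.im ≠ 0 := ne_of_gt hw
  have hw0 : w ≠ 0 := fun h => by simp [h] at hwim
  set q := quadRow N Y i w with hq
  set B := rowDel N Y i with hBdef
  set A := Y * Yᴴ - w • (1 : Matrix (Fin N) (Fin N) ℂ) with hAdef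
  set M := B * Bᴴ - w • (1 : Matrix {k : Fin N // k ≠ i} {k : Fin N // k ≠ i} ℂ) with hMdef
  have hGdel : Gdel N Y i w = (Bᴴ * B - w • 1)⁻¹ := rfl
  have hdA : IsUnit A.det := (LCLAux.sq_det_ne Y w hwim).isUnit
  have hdM : IsUnit M.det := (LCLAux.sq_det_ne B w hwim).isUnit
  have hdG : IsUnit (Bᴴ * B - w • (1 : Matrix (Fin N) (Fin N) ℂ)).det :=
    (LCLAux.sq_det_ne' B w hwim).isUnit
  set G := (Bᴴ * B - w • (1 : Matrix (Fin N) (Fin N) ℂ))⁻¹ with hGdef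
  -- entries of M agree with entries of A
  have hAM : ∀ (k l : {k : Fin N // k ≠ i}), M k l = A k.1 l.1 := by
    intro k l
    simp [hMdef, hAdef, Matrix.sub_apply, Matrix.smul_apply, smul_eq_mul, Matrix.mul_apply,
      Matrix.conjTranspose_apply, hBdef, rowDel, Matrix.one_apply, Subtype.ext_iff]
  -- splitting a sum over `Fin N` at `i`
  have hsplit : ∀ f : Fin N → ℂ, ∑ l, f l = f i + ∑ l : {l : Fin N // l ≠ i}, f l.1 := by
    intro f
    rw [← Finset.add_sum_erase Finset.univ f (Finset.mem_univ i)]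
    congr 1
    exact Finset.sum_subtype _ (fun x => by simp) f
  set c : {k : Fin N // k ≠ i} → ℂ := B *ᵥ star (Y i) with hc
  set d : {k : Fin N // k ≠ i} → ℂ := Y i ᵥ* Bᴴ with hd
  have hcA : ∀ k : {k : Fin N // k ≠ i}, c k = A k.1 i := by
    intro k
    simp [hc, Matrix.mulVec, dotProduct, hBdef, rowDel, hAdef, Matrix.mul_apply,
      Matrix.conjTranspose_apply, Matrix.one_apply_ne k.2]
  have hdA' : ∀ l : {k : Fin N // k ≠ i}, d l = A i l.1 := by
    intro l
    simp [hd, Matrix.vecMul, dotProduct, hBdef, rowDel, hAdef, Matrix.mul_apply,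
      Matrix.conjTranspose_apply, Matrix.one_apply_ne (Ne.symm l.2)]
  set u : Fin N → ℂ := A⁻¹ *ᵥ Pi.single i 1 with hu
  have hAu : A *ᵥ u = Pi.single i 1 := by
    rw [hu, Matrix.mulVec_mulVec, Matrix.mul_nonsing_inv _ hdA, Matrix.one_mulVec]
  have hui : u i = A⁻¹ i i := by
    simp [hu, Matrix.mulVec_single]
  have hstep1 : M *ᵥ (fun k : {k : Fin N // k ≠ i} => u k.1) = (-(u i)) • c := by
    funext k
    have h0 : (A *ᵥ u) k.1 = 0 := by rw [hAu]; exact Pi.single_eq_of_ne k.2 1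
    have h1 : (A *ᵥ u) k.1 = A k.1 i * u i + ∑ l : {l : Fin N // l ≠ i}, A k.1 l.1 * u l.1 := by
      simp only [Matrix.mulVec, dotProduct]
      exact hsplit fun l => A k.1 l * u l
    have h2 : (M *ᵥ fun k : {k : Fin N // k ≠ i} => u k.1) k
        = ∑ l : {l : Fin N // l ≠ i}, A k.1 l.1 * u l.1 := by
      simp only [Matrix.mulVec, dotProduct]
      exact Finset.sum_congr rfl fun l _ => by rw [hAM k l]
    have h3 := h1.symm.trans h0
    rw [h2, Pi.smul_apply, smul_eq_mul, hcA k]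
    linear_combination h3
  have hstep2 : ∀ k : {k : Fin N // k ≠ i}, u k.1 = -(u i) * (M⁻¹ *ᵥ c) k := by
    have h := congrArg (fun v => M⁻¹ *ᵥ v) hstep1
    simp only [Matrix.mulVec_mulVec, Matrix.nonsing_inv_mul _ hdM, Matrix.one_mulVec,
      Matrix.mulVec_smul] at h
    intro k
    have := congrFun h k
    simpa [smul_eq_mul] using this
  have hstep3 : u i * (A i i - dotProduct d (M⁻¹ *ᵥ c)) = 1 := by
    have h1i : (A *ᵥ u) i = 1 := by rw [hAu]; simp
    have h1 : A i i * u i + ∑ l : {l : Fin N // l ≠ i}, A i l.1 * u l.1 = 1 := by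
      rw [← h1i]
      simp only [Matrix.mulVec, dotProduct]
      exact (hsplit fun l => A i l * u l).symm
    have h2 : ∑ l : {l : Fin N // l ≠ i}, A i l.1 * u l.1
        = -(u i) * dotProduct d (M⁻¹ *ᵥ c) := by
      simp only [dotProduct, Finset.mul_sum]
      refine Finset.sum_congr rfl fun l _ => ?_
      rw [hstep2 l, ← hdA' l]
      ring
    rw [h2] at h1
    linear_combination h1
  have hBMB : Bᴴ * M⁻¹ * B = 1 + w • G := by
    have h1 : Bᴴ * M⁻¹ = G * Bᴴ := LCLAux.swap_inv B w hwim
    rw [h1, Matrix.mul_assoc,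
      show Bᴴ * B = (Bᴴ * B - w • 1) + w • (1 : Matrix (Fin N) (Fin N) ℂ) from
        (sub_add_cancel _ _).symm,
      Matrix.mul_add, hGdef, Matrix.nonsing_inv_mul _ hdG, Matrix.mul_smul, Matrix.mul_one]
  have hq' : q = dotProduct (Y i) (G *ᵥ star (Y i)) := by
    simp only [hq, quadRow, hGdel, ← hGdef, dotProduct, Matrix.mulVec, Pi.star_apply,
      Finset.mul_sum, mul_assoc]
  have hAii : A i i = dotProduct (Y i) (star (Y i)) - w := by
    simp [hAdef, Matrix.mul_apply, Matrix.one_apply, dotProduct,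
      Matrix.conjTranspose_apply]
  have hdMc : dotProduct d (M⁻¹ *ᵥ c)
      = dotProduct (Y i) (star (Y i)) + w * q := by
    have h1 : dotProduct d (M⁻¹ *ᵥ c)
        = dotProduct (Y i) ((Bᴴ * M⁻¹ * B) *ᵥ star (Y i)) := by
      rw [hc, hd, Matrix.mulVec_mulVec, ← dotProduct_mulVec, Matrix.mulVec_mulVec,
        ← Matrix.mul_assoc]
    rw [h1, hBMB, Matrix.add_mulVec, Matrix.one_mulVec, Matrix.smul_mulVec,
      dotProduct_add, dotProduct_smul, smul_eq_mul, hq']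
  have hkey : u i * (-w * (1 + q)) = 1 := by
    rw [hAii, hdMc] at hstep3
    linear_combination hstep3
  have hne : 1 + q ≠ 0 := by
    intro h
    rw [h] at hkey
    simp at hkey
  have hwq : -w * (1 + q) ≠ 0 := mul_ne_zero (neg_ne_zero.mpr hw0) hne
  refine ⟨hne, ?_⟩
  rw [← hui, eq_div_of_mul_eq hwq hkey, one_div, mul_inv, inv_neg]


end LCL

end
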